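/- Let P be a polynomial in U ∈ ℝ^(m×n) with P(UN) = (det N)^β P(U) for all N, and set h_P = exp(−tr Δ/(8π)) P and f_P(U) = h_P(U)·exp(−2π tr(Uᵀ U)). Then f_P satisfies the system (E − Δ_{−I}/(4π)) f_P = −(β + m)·I·f_P, where Δ_{−I} = −Δ. -/

import Mathlib

/-!
Write `h = exp(−tr Δ/(8π)) P` and `g(U) = exp(−2π tr(UᵀU))`. Differentiating `h·g` replaces
`∂/∂U_{aj}` by the polynomial operator `∂_{aj} − 4π U_{aj}`, so the left-hand side is `g` times a
polynomial, which collapses to `(4π)⁻¹ Δ_{ij} h − m δ_{ij} h − E_{ji} h`.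
Differentiating `P(U(1 + t e_{ij}))` at `t = 0` turns the determinant condition into the Euler
identity `E_{ji} P = β δ_{ij} P`. Since `[tr Δ, E_{ji}] = 2 Δ_{ji}` and `Δ_{ji}` commutes with
`tr Δ`, conjugating by `exp(c tr Δ)` gives `E_{ji} h = β δ_{ij} h − 2c Δ_{ji} h`; with
`c = −1/(8π)` the Laplacian terms cancel.
-/

open scoped BigOperators
open Matrix MvPolynomial

/-- Partial derivative `∂/∂U_{ij}` of a function on `ℝ^(m×n)`. -/
noncomputable def pd {m n : ℕ} (i : Fin m) (j : Fin n)
    (f : (Fin m → Fin n → ℝ) → ℝ) : (Fin m → Fin n → ℝ) → ℝ :=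
  fun U => fderiv ℝ f U (Pi.single i (Pi.single j 1))

/-- The normalized trace Laplacian `tr Δ` acting on polynomials. -/
noncomputable def trLapPoly {m n : ℕ}
    (p : MvPolynomial (Fin m × Fin n) ℝ) : MvPolynomial (Fin m × Fin n) ℝ :=
  ∑ c : Fin n, ∑ a : Fin m, pderiv (a, c) (pderiv (a, c) p)

/-- `exp(c · tr Δ)` applied to a polynomial (a finite sum). -/
noncomputable def expTrLap {m n : ℕ} (c : ℝ)
    (p : MvPolynomial (Fin m × Fin n) ℝ) : MvPolynomial (Fin m × Fin n) ℝ :=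
  ∑ k ∈ Finset.range (p.totalDegree + 1),
    (c ^ k / k.factorial : ℝ) • trLapPoly^[k] p

theorem pow_succ_mul_eq_of_mul_eq_add {A : Type*} [Semiring A] {a b d : A}
    (hab : a * b = b * a + d) (had : Commute a d) (k : ℕ) :
    a ^ (k + 1) * b = b * a ^ (k + 1) + (k + 1) • (d * a ^ k) := by
  induction k with
  | zero => simpa using hab
  | succ k ih =>
    calc a ^ (k + 1 + 1) * b = a * (a ^ (k + 1) * b) := by rw [pow_succ', mul_assoc]
      _ = (a * b) * a ^ (k + 1) + (k + 1) • ((a * d) * a ^ k) := by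
        rw [ih, mul_add, mul_smul_comm, mul_assoc, mul_assoc]
      _ = b * a ^ (k + 1 + 1) + (k + 1 + 1) • (d * a ^ (k + 1)) := by
        rw [hab, had.eq, add_mul, mul_assoc, mul_assoc, ← pow_succ', ← pow_succ', add_assoc,
          ← succ_nsmul']

namespace Module.End

variable {K M : Type*} [Field K] [AddCommGroup M] [Module K M]

noncomputable def truncExp (c : K) (a : Module.End K M) (N : ℕ) : Module.End K M :=
  ∑ k ∈ Finset.range (N + 1), (c ^ k / k.factorial) • a ^ k

theorem apply_truncExp_of_mul_eq_add [CharZero K] {a b d : Module.End K M} (hab : a * b = b * a + d)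
    (had : Commute a d) {r : K} {v : M} (hv : b v = r • v) (c : K) {N : ℕ}
    (hN : d ((a ^ N) v) = 0) :
    b (truncExp c a N v) = r • truncExp c a N v - c • d (truncExp c a N v) := by
  -- `b a^(k+1) = a^(k+1) b - (k+1) d a^k`, and `(k+1) c^(k+1)/(k+1)! = c · c^k/k!`.
  have hstep : ∀ k : ℕ, (c ^ (k + 1) / (k + 1).factorial) • b ((a ^ (k + 1)) v) =
      r • ((c ^ (k + 1) / (k + 1).factorial) • (a ^ (k + 1)) v) -
        c • ((c ^ k / k.factorial) • d ((a ^ k) v)) := by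
    intro k
    have hcomm := congrArg (· v) (pow_succ_mul_eq_of_mul_eq_add hab had k)
    simp only [Module.End.mul_apply, LinearMap.add_apply, LinearMap.smul_apply, hv,
      map_smul] at hcomm
    rw [eq_sub_of_add_eq hcomm.symm, ← Nat.cast_smul_eq_nsmul K, smul_sub, smul_comm _ r,
      smul_smul, smul_smul, smul_smul, Nat.factorial_succ]
    congr 2
    push_cast
    field_simp
    ring
  simp only [truncExp, LinearMap.sum_apply, LinearMap.smul_apply, map_sum, map_smul]
  rw [Finset.sum_range_succ (fun k => (c ^ k / k.factorial) • d ((a ^ k) v)), hN, smul_zero,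
    add_zero, Finset.sum_range_succ' (fun k => (c ^ k / k.factorial) • b ((a ^ k) v)),
    Finset.sum_range_succ' (fun k => (c ^ k / k.factorial) • (a ^ k) v),
    Finset.sum_congr rfl fun k _ => hstep k, Finset.sum_sub_distrib, ← Finset.smul_sum,
    ← Finset.smul_sum]
  simp only [pow_zero, Nat.factorial_zero, Nat.cast_one, div_one, one_smul, Module.End.one_apply,
    hv, smul_add]
  abel

end Module.End

namespace MvPolynomial

section PDeriv

variable {R σ : Type*} [CommSemiring R]

theorem pderiv_pderiv_comm (x y : σ) (p : MvPolynomial σ R) :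
    pderiv x (pderiv y p) = pderiv y (pderiv x p) := by
  classical
  induction p using MvPolynomial.induction_on with
  | C a => simp
  | add p q hp hq => simp [hp, hq]
  | mul_X p s hp =>
    simp only [pderiv_mul, map_add, hp, pderiv_X, Pi.single_apply]
    split_ifs <;> simp [add_right_comm]

theorem totalDegree_pderiv_le (x : σ) (p : MvPolynomial σ R) :
    (pderiv x p).totalDegree ≤ p.totalDegree - 1 := by
  conv_lhs => rw [← sum_homogeneousComponent p]
  rw [map_sum]
  refine (totalDegree_finsetSum _ _).trans (Finset.sup_le fun k hk => ?_)
  have hk : k ≤ p.totalDegree := Nat.lt_succ_iff.mp (Finset.mem_range.mp hk)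
  exact ((homogeneousComponent_isHomogeneous k p).pderiv.totalDegree_le).trans (by omega)

theorem pderiv_pderiv_eq_zero_of_totalDegree_le_one {p : MvPolynomial σ R}
    (hp : p.totalDegree ≤ 1) (x y : σ) : pderiv x (pderiv y p) = 0 := by
  rw [totalDegree_eq_zero_iff_eq_C.mp
    (Nat.le_zero.mp ((totalDegree_pderiv_le y p).trans (by omega))), pderiv_C]

variable [Fintype σ]

noncomputable def laplacian : Module.End R (MvPolynomial σ R) :=
  ∑ x, (pderiv x).toLinearMap ∘ₗ (pderiv x).toLinearMap

theorem laplacian_apply (p : MvPolynomial σ R) :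
    laplacian p = ∑ x, pderiv x (pderiv x p) := by
  simp [laplacian, LinearMap.sum_apply]

theorem laplacian_pderiv (x : σ) (p : MvPolynomial σ R) :
    laplacian (pderiv x p) = pderiv x (laplacian p) := by
  simp only [laplacian_apply, map_sum, pderiv_pderiv_comm x]

theorem laplacian_X_mul [DecidableEq σ] (z : σ) (p : MvPolynomial σ R) :
    laplacian (X z * p) = X z * laplacian p + 2 * pderiv z p := by
  have hterm : ∀ x, pderiv x (pderiv x (X z * p)) =
      X z * pderiv x (pderiv x p) + if x = z then 2 * pderiv z p else 0 := by
    intro x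
    rcases eq_or_ne x z with rfl | hxz
    · simp only [pderiv_mul, pderiv_X_self, pderiv_one, map_add, zero_mul, zero_add, ↓reduceIte]
      ring
    · simp [pderiv_X_of_ne hxz.symm, hxz]
  rw [laplacian_apply, laplacian_apply, Finset.sum_congr rfl fun x _ => hterm x]
  simp [Finset.sum_add_distrib, Finset.mul_sum]

theorem totalDegree_laplacian_le (p : MvPolynomial σ R) :
    (laplacian p).totalDegree ≤ p.totalDegree - 2 := by
  rw [laplacian_apply]
  refine (totalDegree_finsetSum _ _).trans (Finset.sup_le fun x _ => ?_)
  exact (totalDegree_pderiv_le _ _).trans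
    ((Nat.sub_le_sub_right (totalDegree_pderiv_le _ _) 1).trans (by omega))

theorem totalDegree_laplacian_pow_le (k : ℕ) (p : MvPolynomial σ R) :
    ((laplacian ^ k) p).totalDegree ≤ p.totalDegree - 2 * k := by
  induction k with
  | zero => simp
  | succ k ih =>
    rw [pow_succ', Module.End.mul_apply]
    exact (totalDegree_laplacian_le _).trans (by omega)

theorem pderiv_C_mul_sum_X_sq [DecidableEq σ] (k : R) (x : σ) :
    pderiv x (C k * ∑ q, X q ^ 2 : MvPolynomial σ R) = C (2 * k) * X x := by
  simp [pderiv_X, Pi.single_apply, map_ofNat, mul_comm, mul_assoc]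

end PDeriv

section MatrixVariables

variable {R ι ν : Type*} [CommSemiring R] [Fintype ι]

noncomputable def genEuler (i j : ν) : Module.End R (MvPolynomial (ι × ν) R) :=
  ∑ a, LinearMap.mulLeft R (X (a, i)) ∘ₗ (pderiv (a, j)).toLinearMap

noncomputable def genLaplacian (i j : ν) : Module.End R (MvPolynomial (ι × ν) R) :=
  ∑ a, (pderiv (a, i)).toLinearMap ∘ₗ (pderiv (a, j)).toLinearMap

theorem genEuler_apply (i j : ν) (p : MvPolynomial (ι × ν) R) :
    genEuler i j p = ∑ a, X (a, i) * pderiv (a, j) p := by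
  simp [genEuler, LinearMap.sum_apply]

theorem genLaplacian_apply (i j : ν) (p : MvPolynomial (ι × ν) R) :
    genLaplacian i j p = ∑ a, pderiv (a, i) (pderiv (a, j) p) := by
  simp [genLaplacian, LinearMap.sum_apply]

theorem genLaplacian_comm (i j : ν) :
    (genLaplacian i j : Module.End R (MvPolynomial (ι × ν) R)) = genLaplacian j i := by
  refine LinearMap.ext fun p => ?_
  simp only [genLaplacian_apply, pderiv_pderiv_comm (_, i)]

theorem genLaplacian_eq_zero_of_totalDegree_le_one (i j : ν) {p : MvPolynomial (ι × ν) R}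
    (hp : p.totalDegree ≤ 1) : genLaplacian i j p = 0 := by
  simp [genLaplacian_apply, pderiv_pderiv_eq_zero_of_totalDegree_le_one hp]

variable [Fintype ν]

theorem commute_laplacian_genLaplacian (i j : ν) :
    Commute (laplacian : Module.End R (MvPolynomial (ι × ν) R)) (genLaplacian i j) := by
  refine LinearMap.ext fun p => ?_
  simp [genLaplacian_apply, laplacian_pderiv]

theorem laplacian_mul_genEuler [DecidableEq ι] [DecidableEq ν] (i j : ν) :
    (laplacian * genEuler i j : Module.End R (MvPolynomial (ι × ν) R)) =
      genEuler i j * laplacian + 2 • genLaplacian i j := by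
  refine LinearMap.ext fun p => ?_
  simp [genEuler_apply, genLaplacian_apply, laplacian_X_mul, laplacian_pderiv,
    Finset.sum_add_distrib, two_mul]

end MatrixVariables

section GaussPDeriv

variable {R σ : Type*} [CommRing R]

/-- `∂_x (p · e^{-κ|x|²/2}) = gaussPDeriv κ x p · e^{-κ|x|²/2}`. -/
noncomputable def gaussPDeriv (κ : R) (x : σ) (p : MvPolynomial σ R) : MvPolynomial σ R :=
  pderiv x p - κ • (X x * p)

theorem smul_X_mul_gaussPDeriv_add_gaussPDeriv_gaussPDeriv (κ : R) (x y : σ)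
    (p : MvPolynomial σ R) :
    κ • (X x * gaussPDeriv κ y p) + gaussPDeriv κ x (gaussPDeriv κ y p) =
      pderiv x (pderiv y p) - κ • (pderiv x (X y) * p) - κ • (X y * pderiv x p) := by
  simp only [gaussPDeriv, map_sub, pderiv_mul, smul_eq_C_mul, pderiv_C]
  ring

variable {K ι ν : Type*} [Field K] [Fintype ι] [DecidableEq ι] [DecidableEq ν]

theorem sum_X_mul_gaussPDeriv_add_inv_smul_sum {κ : K} (hκ : κ ≠ 0) (i j : ν)
    (p : MvPolynomial (ι × ν) K) :
    ∑ a, X (a, i) * gaussPDeriv κ (a, j) p +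
        κ⁻¹ • ∑ a, gaussPDeriv κ (a, i) (gaussPDeriv κ (a, j) p) =
      κ⁻¹ • genLaplacian i j p - (if i = j then (Fintype.card ι : K) else 0) • p -
        genEuler j i p := by
  have hsum : ∑ a, (pderiv (a, i) (X (a, j)) * p : MvPolynomial (ι × ν) K) =
      (if i = j then (Fintype.card ι : K) else 0) • p := by
    split_ifs with h
    · subst h
      simp [pderiv_X, Algebra.smul_def]
    · simp [pderiv_X, Ne.symm h]
  calc _ = κ⁻¹ • ∑ a, (κ • (X (a, i) * gaussPDeriv κ (a, j) p) +
          gaussPDeriv κ (a, i) (gaussPDeriv κ (a, j) p)) := by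
        rw [Finset.sum_add_distrib, smul_add, ← Finset.smul_sum, smul_smul, inv_mul_cancel₀ hκ,
          one_smul]
    _ = _ := by
        simp only [smul_X_mul_gaussPDeriv_add_gaussPDeriv_gaussPDeriv, Finset.sum_sub_distrib,
          ← Finset.smul_sum, hsum, genLaplacian_apply, genEuler_apply, smul_sub, smul_smul,
          ← mul_assoc, inv_mul_cancel₀ hκ, one_mul, one_smul]

end GaussPDeriv

section Calculus

variable {σ : Type*} [Fintype σ] [DecidableEq σ]

theorem hasFDerivAt_eval (p : MvPolynomial σ ℝ) (x : σ → ℝ) :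
    HasFDerivAt (fun y => eval y p)
      (∑ i, eval x (pderiv i p) • (ContinuousLinearMap.proj i : (σ → ℝ) →L[ℝ] ℝ)) x := by
  induction p using MvPolynomial.induction_on with
  | C a =>
    simp only [eval_C, pderiv_C, map_zero, zero_smul, Finset.sum_const_zero]
    exact hasFDerivAt_const a x
  | add p q hp hq =>
    simp only [map_add, add_smul, Finset.sum_add_distrib]
    exact hp.fun_add hq
  | mul_X p s hp =>
    simp only [eval_mul, eval_X]
    refine (hp.fun_mul (hasFDerivAt_apply s x)).congr_fderiv ?_
    ext v
    simp [Pi.single_apply, apply_ite (eval x), ite_mul, add_mul,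
      Finset.sum_add_distrib, Finset.mul_sum, mul_assoc]

theorem hasDerivAt_eval_add_smul (p : MvPolynomial σ ℝ) (x v : σ → ℝ) :
    HasDerivAt (fun t : ℝ => eval (x + t • v) p) (∑ i, eval x (pderiv i p) * v i) 0 := by
  have hline : HasDerivAt (fun t : ℝ => x + t • v) v 0 := by
    simpa using ((hasDerivAt_id (0 : ℝ)).smul_const v).const_add x
  simpa only [Function.comp_def, _root_.sum_apply, _root_.smul_apply,
    ContinuousLinearMap.proj_apply, smul_eq_mul] using
    (hasFDerivAt_eval p x).comp_hasDerivAt_of_eq 0 hline (by simp)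

end Calculus

end MvPolynomial

section MatrixCalculus

variable {ι ν : Type*} [Fintype ι] [Fintype ν] [DecidableEq ι] [DecidableEq ν]

theorem hasFDerivAt_eval_uncurry (p : MvPolynomial (ι × ν) ℝ) (U : ι → ν → ℝ) :
    HasFDerivAt (fun W : ι → ν → ℝ => eval (fun q => W q.1 q.2) p)
      ((∑ q, eval (fun q => U q.1 q.2) (pderiv q p) •
          (ContinuousLinearMap.proj q : (ι × ν → ℝ) →L[ℝ] ℝ)).comp
        ((LinearEquiv.curry ℝ ℝ ι ν).symm.toContinuousLinearEquiv : (ι → ν → ℝ) →L[ℝ] _)) U :=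
  (hasFDerivAt_eval p _).comp U
    ((LinearEquiv.curry ℝ ℝ ι ν).symm.toContinuousLinearEquiv.hasFDerivAt (x := U))

theorem Matrix.det_one_add_replicateCol_single_mul_replicateRow_single {R : Type*} [CommRing R]
    (i j : ν) (t : R) :
    det (1 + replicateCol Unit (Pi.single i t) * replicateRow Unit (Pi.single j (1 : R))) =
      1 + t * if i = j then 1 else 0 := by
  rw [det_one_add_replicateCol_mul_replicateRow]
  simp [Pi.single_apply, mul_comm]

theorem genEuler_eq_smul_of_det_homogeneous (β : ℕ) {P : MvPolynomial (ι × ν) ℝ}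
    (hhom : ∀ (U : ι → ν → ℝ) (N : Matrix ν ν ℝ),
      eval (fun q => ∑ c, U q.1 c * N c q.2) P = N.det ^ β * eval (fun q => U q.1 q.2) P)
    (i j : ν) : genEuler i j P = (if i = j then (β : ℝ) else 0) • P := by
  refine MvPolynomial.funext fun x => ?_
  set δ : ℝ := if i = j then 1 else 0
  set v : ι × ν → ℝ := fun q => x (q.1, i) * (Pi.single j 1 : ν → ℝ) q.2
  -- `U (1 + t e_{ij})` is the line `x + t v`, and `det (1 + t e_{ij}) = 1 + t δ`.
  have hcurve : (fun t : ℝ => eval (x + t • v) P) = fun t => (1 + t * δ) ^ β * eval x P := by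
    funext t
    have := hhom (fun a c => x (a, c))
      (1 + replicateCol Unit (Pi.single i t) * replicateRow Unit (Pi.single j (1 : ℝ)))
    rw [Matrix.det_one_add_replicateCol_single_mul_replicateRow_single] at this
    rw [← this]
    congr 2
    funext ⟨a, b⟩
    by_cases hb : b = j
    · subst hb
      simp [v, Matrix.mul_apply, Matrix.one_apply, Pi.single_apply, add_mul, ite_mul,
        Finset.sum_add_distrib, mul_comm]
    · simp [v, Matrix.mul_apply, Matrix.one_apply, Pi.single_apply, hb]
  have hline := hasDerivAt_eval_add_smul P x v
  rw [hcurve] at hline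
  have hpow : HasDerivAt (fun t : ℝ => (1 + t * δ) ^ β * eval x P) (β * δ * eval x P) 0 := by
    simpa using (((hasDerivAt_id (0 : ℝ)).mul_const δ).const_add 1).pow β |>.mul_const (eval x P)
  have key := hline.unique hpow
  simp only [v, Fintype.sum_prod_type, Pi.single_apply, mul_ite, mul_one, mul_zero,
    Finset.sum_ite_eq', Finset.mem_univ, if_true] at key
  calc eval x (genEuler i j P) = ∑ a, eval x (pderiv (a, j) P) * x (a, i) := by
        simp [genEuler_apply, mul_comm]
    _ = β * δ * eval x P := key
    _ = eval x ((if i = j then (β : ℝ) else 0) • P) := by split_ifs <;> simp [δ, *]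

end MatrixCalculus

section HermiteFunction

variable {m n : ℕ}

theorem trLapPoly_eq_laplacian :
    (trLapPoly : MvPolynomial (Fin m × Fin n) ℝ → _) = laplacian := by
  funext p
  rw [trLapPoly, laplacian_apply, Fintype.sum_prod_type_right]

theorem expTrLap_eq_truncExp (c : ℝ) (p : MvPolynomial (Fin m × Fin n) ℝ) :
    expTrLap c p = Module.End.truncExp c laplacian p.totalDegree p := by
  simp [expTrLap, Module.End.truncExp, trLapPoly_eq_laplacian, LinearMap.sum_apply,
    Module.End.coe_pow]

theorem genEuler_expTrLap {r : ℝ} {P : MvPolynomial (Fin m × Fin n) ℝ} (i j : Fin n)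
    (hP : genEuler i j P = r • P) (c : ℝ) :
    genEuler i j (expTrLap c P) = r • expTrLap c P - (2 * c) • genLaplacian i j (expTrLap c P) := by
  have hN : (2 • genLaplacian i j) ((laplacian ^ P.totalDegree) P) = 0 := by
    rw [LinearMap.smul_apply, genLaplacian_eq_zero_of_totalDegree_le_one _ _
      ((totalDegree_laplacian_pow_le _ _).trans (by omega)), smul_zero]
  have hcomm := (commute_laplacian_genLaplacian (R := ℝ) (ι := Fin m) i j).smul_right 2
  rw [expTrLap_eq_truncExp, Module.End.apply_truncExp_of_mul_eq_add (laplacian_mul_genEuler i j)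
    hcomm hP c hN, LinearMap.smul_apply, ← Nat.cast_smul_eq_nsmul ℝ, smul_smul]
  norm_num [mul_comm]

theorem pd_eval_mul_exp_eval (p G : MvPolynomial (Fin m × Fin n) ℝ) (a : Fin m) (c : Fin n) :
    pd a c (fun W => eval (fun q => W q.1 q.2) p * Real.exp (eval (fun q => W q.1 q.2) G)) =
      fun W => eval (fun q => W q.1 q.2) (pderiv (a, c) p + p * pderiv (a, c) G) *
        Real.exp (eval (fun q => W q.1 q.2) G) := by
  funext U
  rw [pd, ((hasFDerivAt_eval_uncurry p U).fun_mul (hasFDerivAt_eval_uncurry G U).exp).fderiv]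
  simp only [_root_.add_apply, _root_.smul_apply, ContinuousLinearMap.comp_apply,
    ContinuousLinearEquiv.coe_coe, LinearEquiv.coe_toContinuousLinearEquiv',
    LinearEquiv.coe_curry_symm, Pi.uncurry_single_single, _root_.sum_apply,
    ContinuousLinearMap.proj_apply, Pi.single_apply, smul_eq_mul, mul_ite, mul_one, mul_zero,
    Finset.sum_ite_eq', Finset.mem_univ, ↓reduceIte, map_add, map_mul]
  ring

theorem pd_eval_mul_gaussian (p : MvPolynomial (Fin m × Fin n) ℝ) (a : Fin m) (c : Fin n) :
    pd a c (fun W => eval (fun q => W q.1 q.2) p *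
        Real.exp (-2 * Real.pi * ∑ x, ∑ y, W x y ^ 2)) =
      fun W => eval (fun q => W q.1 q.2) (gaussPDeriv (4 * Real.pi) (a, c) p) *
        Real.exp (-2 * Real.pi * ∑ x, ∑ y, W x y ^ 2) := by
  have hG : ∀ W : Fin m → Fin n → ℝ, -2 * Real.pi * ∑ x, ∑ y, W x y ^ 2 =
      eval (fun q => W q.1 q.2) (C (-2 * Real.pi) * ∑ q : Fin m × Fin n, X q ^ 2) := by
    intro W
    simp [Fintype.sum_prod_type]
  simp only [hG, pd_eval_mul_exp_eval]
  funext W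
  rw [pderiv_C_mul_sum_X_sq, gaussPDeriv, smul_eq_C_mul]
  congr 2
  simp only [map_mul, map_neg, map_ofNat]
  ring

theorem genEuler_expTrLap_of_det_homogeneous (β : ℕ) {P : MvPolynomial (Fin m × Fin n) ℝ}
    (hhom : ∀ (U : Fin m → Fin n → ℝ) (N : Matrix (Fin n) (Fin n) ℝ),
      eval (fun q => ∑ c, U q.1 c * N c q.2) P = N.det ^ β * eval (fun q => U q.1 q.2) P)
    (i j : Fin n) :
    genEuler j i (expTrLap (-(8 * Real.pi)⁻¹) P) =
      (if i = j then (β : ℝ) else 0) • expTrLap (-(8 * Real.pi)⁻¹) P +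
        (4 * Real.pi)⁻¹ • genLaplacian i j (expTrLap (-(8 * Real.pi)⁻¹) P) := by
  rw [genEuler_expTrLap j i (genEuler_eq_smul_of_det_homogeneous β hhom j i), genLaplacian_comm]
  simp only [eq_comm (a := j), sub_eq_add_neg, ← neg_smul]
  congr 2
  field_simp
  ring

end HermiteFunction

/-- for a polynomial `P` with `P(UN) = (det N)^β P(U)`,
`h_P = exp(−tr Δ/(8π)) P` and `f_P(U) = h_P(U)·exp(−2π tr(UᵀU))`, the function
`f_P` satisfies `(E − Δ_{−I}/(4π)) f_P = −(β+m)·I·f_P`, where `Δ_{−I} = −Δ`. -/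
theorem stmt10 {m n : ℕ} (β : ℕ) (P : MvPolynomial (Fin m × Fin n) ℝ)
    (hhom : ∀ (U : Fin m → Fin n → ℝ) (N : Matrix (Fin n) (Fin n) ℝ),
      MvPolynomial.eval (fun q => ∑ c, U q.1 c * N c q.2) P =
        N.det ^ β * MvPolynomial.eval (fun q => U q.1 q.2) P)
    (U : Fin m → Fin n → ℝ) (i j : Fin n) :
    (∑ d, U d i * pd d j (fun W : Fin m → Fin n → ℝ =>
        MvPolynomial.eval (fun q => W q.1 q.2) (expTrLap (-(8 * Real.pi)⁻¹) P) *
          Real.exp (-2 * Real.pi * ∑ p, ∑ q, W p q ^ 2)) U) +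
      (4 * Real.pi)⁻¹ *
        (∑ a, pd a i (pd a j fun W : Fin m → Fin n → ℝ =>
          MvPolynomial.eval (fun q => W q.1 q.2) (expTrLap (-(8 * Real.pi)⁻¹) P) *
            Real.exp (-2 * Real.pi * ∑ p, ∑ q, W p q ^ 2)) U) =
      -((β : ℝ) + m) * (if i = j then 1 else 0) *
        (MvPolynomial.eval (fun q => U q.1 q.2) (expTrLap (-(8 * Real.pi)⁻¹) P) *
          Real.exp (-2 * Real.pi * ∑ p, ∑ q, U p q ^ 2)) := by
  set h := expTrLap (-(8 * Real.pi)⁻¹) P with hh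
  have hpoly : ∑ a, X (a, i) * gaussPDeriv (4 * Real.pi) (a, j) h +
      (4 * Real.pi)⁻¹ • ∑ a, gaussPDeriv (4 * Real.pi) (a, i) (gaussPDeriv (4 * Real.pi) (a, j) h) =
        (-((β : ℝ) + m) * if i = j then 1 else 0) • h := by
    rw [sum_X_mul_gaussPDeriv_add_inv_smul_sum (by positivity) i j,
      genEuler_expTrLap_of_det_homogeneous β hhom i j, Fintype.card_fin, ← hh]
    split_ifs <;> module
  have hev := congrArg
    (fun p => eval (fun q => U q.1 q.2) p * Real.exp (-2 * Real.pi * ∑ p, ∑ q, U p q ^ 2)) hpoly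
  simp only [pd_eval_mul_gaussian]
  simp only [map_add, map_sum, smul_eval, eval_mul, eval_X, add_mul, Finset.sum_mul,
    Finset.mul_sum, mul_assoc] at hev ⊢
  linear_combination hev
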